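/- arXiv:1307.1670 — 2 statements merged into one kernel-verified Lean document; each statement's English description precedes it below -/
import Mathlib

section
/- Let x : ℝ → Fin N → Fin M → ℝ be differentiable and satisfy the graph replicator equation (d/dt) x(t) v s = F v s (x(t)) for all t, v, s. If there exist a vertex v, a strategy s and a time t₁ with x(t₁) v s = 0, then x(t) v s = 0 for all t ∈ ℝ (the faces {x v s = 0} are invariant: since the vector field is polynomial, solutions are unique, and the function obtained by setting that component identically to zero is again a solution). -/
open Finset Filter

/-- Expected payoff of pure strategy `s` at vertex `v` in state `x`. -/
noncomputable def pGraph {N M : ℕ} (a : Fin N → Fin N → ℝ)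
    (B : Fin N → Matrix (Fin M) (Fin M) ℝ)
    (v : Fin N) (s : Fin M) (x : Fin N → Fin M → ℝ) : ℝ :=
  ∑ r, B v s r * ((1 / ∑ w, a v w) * ∑ w, a v w * x w r)

/-- Average payoff at vertex `v` in state `x`. -/
noncomputable def phiGraph {N M : ℕ} (a : Fin N → Fin N → ℝ)
    (B : Fin N → Matrix (Fin M) (Fin M) ℝ)
    (v : Fin N) (x : Fin N → Fin M → ℝ) : ℝ :=
  ∑ s, x v s * pGraph a B v s x

/-- Graph replicator vector field. -/
noncomputable def FGraph {N M : ℕ} (a : Fin N → Fin N → ℝ)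
    (B : Fin N → Matrix (Fin M) (Fin M) ℝ)
    (v : Fin N) (s : Fin M) (x : Fin N → Fin M → ℝ) : ℝ :=
  x v s * (pGraph a B v s x - phiGraph a B v x)

/-!
The equation for a single component reads `y' = y * g` with `g = p v s - φ v` evaluated along the
solution, a continuous function of time. Such a linear scalar equation is solved explicitly by
`y t = y t₁ * exp (∫ g)`, so `y` vanishes everywhere as soon as it vanishes once.
-/

theorem eq_mul_exp_integral_of_hasDerivAt_mul {y g : ℝ → ℝ} (hg : Continuous g)
    (hy : ∀ t, HasDerivAt y (y t * g t) t) (t₁ t : ℝ) :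
    y t = y t₁ * Real.exp (∫ τ in t₁..t, g τ) := by
  set G : ℝ → ℝ := fun t => ∫ τ in t₁..t, g τ
  have hG : ∀ t, HasDerivAt G (g t) t := fun t =>
    intervalIntegral.integral_hasDerivAt_right (hg.intervalIntegrable t₁ t)
      (hg.stronglyMeasurableAtFilter _ _) hg.continuousAt
  have hderiv : ∀ t, HasDerivAt (fun t => y t * Real.exp (-G t)) 0 t := fun t =>
    ((hy t).mul (hG t).neg.exp).congr_deriv (by ring)
  have hconst := is_const_of_deriv_eq_zero (fun t => (hderiv t).differentiableAt)
    (fun t => (hderiv t).deriv) t t₁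
  have hG₁ : G t₁ = 0 := intervalIntegral.integral_same
  simp only [hG₁, neg_zero, Real.exp_zero, mul_one] at hconst
  rw [← hconst, mul_assoc, ← Real.exp_add, neg_add_cancel, Real.exp_zero, mul_one]

theorem continuous_pGraph {N M : ℕ} (a : Fin N → Fin N → ℝ)
    (B : Fin N → Matrix (Fin M) (Fin M) ℝ) (v : Fin N) (s : Fin M) :
    Continuous (pGraph a B v s) := by
  unfold pGraph
  fun_prop

theorem continuous_phiGraph {N M : ℕ} (a : Fin N → Fin N → ℝ)
    (B : Fin N → Matrix (Fin M) (Fin M) ℝ) (v : Fin N) :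
    Continuous (phiGraph a B v) := by
  unfold phiGraph
  have := continuous_pGraph a B v
  fun_prop

theorem face_invariant_general
    (N M : ℕ)
    (a : Fin N → Fin N → ℝ)
    (B : Fin N → Matrix (Fin M) (Fin M) ℝ)
    (x : ℝ → Fin N → Fin M → ℝ)
    (hdiff : ∀ v s, Differentiable ℝ (fun t => x t v s))
    (hode : ∀ t v s, deriv (fun τ => x τ v s) t = FGraph a B v s (x t))
    (v : Fin N) (s : Fin M) (t₁ : ℝ) (hzero : x t₁ v s = 0) :
    ∀ t : ℝ, x t v s = 0 := by
  have hx : Continuous x := continuous_pi fun w => continuous_pi fun r => (hdiff w r).continuous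
  have hg : Continuous fun t => pGraph a B v s (x t) - phiGraph a B v (x t) :=
    ((continuous_pGraph a B v s).comp hx).sub ((continuous_phiGraph a B v).comp hx)
  have hy : ∀ t, HasDerivAt (fun τ => x τ v s)
      (x t v s * (pGraph a B v s (x t) - phiGraph a B v (x t))) t := fun t => by
    rw [← FGraph, ← hode]
    exact (hdiff v s t).hasDerivAt
  intro t
  rw [eq_mul_exp_integral_of_hasDerivAt_mul hg hy t₁ t, hzero, zero_mul]

theorem face_invariant
    (N M : ℕ) (hN : 1 ≤ N) (hM : 1 ≤ M)
    (a : Fin N → Fin N → ℝ)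
    (ha : ∀ v w, 0 ≤ a v w) (haa : ∀ v, a v v = 0)
    (hd : ∀ v, 0 < ∑ w, a v w)
    (B : Fin N → Matrix (Fin M) (Fin M) ℝ)
    (x : ℝ → Fin N → Fin M → ℝ)
    (hdiff : ∀ v s, Differentiable ℝ (fun t => x t v s))
    (hode : ∀ t v s, deriv (fun τ => x τ v s) t = FGraph a B v s (x t))
    (v : Fin N) (s : Fin M) (t₁ : ℝ) (hzero : x t₁ v s = 0) :
    ∀ t : ℝ, x t v s = 0 :=
  face_invariant_general N M a B x hdiff hode v s t₁ hzero
end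

section
/- Homogeneous initial conditions stay homogeneous: suppose all payoff matrices coincide, B v = B for every vertex v. If x : ℝ → Fin N → Fin M → ℝ is differentiable, solves the graph replicator equation (d/dt) x(t) v s = F v s (x(t)) for all t, v, s, and satisfies x(0) v = c for every vertex v and some c : Fin M → ℝ, then x(t) v = x(t) w for all vertices v, w and all t ∈ ℝ, and each trajectory t ↦ x(t) v solves the classical replicator equation ẏ_s = y_s((B y)_s − yᵀ B y) with y(0) = c. -/
open Finset Filter

/-!
Since all vertices share the payoff matrix `B₀` and every vertex averages its neighbours with
weights summing to one, the graph replicator field restricted to homogeneous states is the classical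
replicator field at every vertex; in particular it is tangent to the diagonal. The field is
polynomial, hence locally Lipschitz, so uniqueness of solutions keeps a trajectory starting on the
diagonal there for all time.
-/

section Uniqueness

variable {E : Type*} [NormedAddCommGroup E] [NormedSpace ℝ E]

/-- On a bounded time interval both solutions stay in a compact set, on which `G` is Lipschitz. -/
theorem ODE_solution_unique_of_locallyLipschitz_add {G : E → E} (hG : LocallyLipschitz G)
    (c : ℝ → E) {f g : ℝ → E} (hf : ∀ t, HasDerivAt f (G (f t) + c t) t)
    (hg : ∀ t, HasDerivAt g (G (g t) + c t) t) {t₀ : ℝ} (heq : f t₀ = g t₀) : f = g := by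
  funext t
  set a := min t t₀ - 1
  set b := max t t₀ + 1
  have hf_cont : Continuous f := continuous_iff_continuousAt.2 fun t => (hf t).continuousAt
  have hg_cont : Continuous g := continuous_iff_continuousAt.2 fun t => (hg t).continuousAt
  set s := f '' Set.Icc a b ∪ g '' Set.Icc a b
  have hs : IsCompact s :=
    (isCompact_Icc.image hf_cont).union (isCompact_Icc.image hg_cont)
  obtain ⟨K, hK⟩ := hG.locallyLipschitzOn.exists_lipschitzOnWith_of_compact hs
  refine ODE_solution_unique_of_mem_Ioo (s := fun _ => s)
    (fun t _ => hK.add (LipschitzWith.const (c t)).lipschitzOnWith)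
    (t₀ := t₀) ⟨by grind, by grind⟩
    (fun t ht => ⟨hf t, Or.inl ⟨t, Set.Ioo_subset_Icc_self ht, rfl⟩⟩)
    (fun t ht => ⟨hg t, Or.inr ⟨t, Set.Ioo_subset_Icc_self ht, rfl⟩⟩) heq ⟨by grind, by grind⟩

/-- Both `x` and the diagonal curve `t ↦ fun _ => x t i` solve
`ẋ = (Φ x - fun _ => Φ x i) + fun _ => Φ (x t) i`. -/
theorem eq_const_of_hasDerivAt_of_tangent_diagonal {ι : Type*} [Fintype ι]
    {Φ : (ι → E) → ι → E} (hΦ : LocallyLipschitz Φ)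
    (hdiag : ∀ y i j, Φ (fun _ => y) i = Φ (fun _ => y) j)
    {x : ℝ → ι → E} (hx : ∀ t, HasDerivAt x (Φ (x t)) t) {t₀ : ℝ} (i : ι)
    (h₀ : x t₀ = fun _ => x t₀ i) (t : ℝ) : x t = fun _ => x t i := by
  have hG : LocallyLipschitz fun X => Φ X - fun _ => Φ X i :=
    let diagonalOf : (ι → E) →L[ℝ] ι → E := .pi fun _ => .proj i
    hΦ.sub (diagonalOf.lipschitz.locallyLipschitz.comp hΦ)
  have hy : ∀ t, HasDerivAt (fun t (_ : ι) => x t i) (fun _ => Φ (x t) i) t := fun t =>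
    hasDerivAt_pi.2 fun _ => hasDerivAt_pi.1 (hx t) i
  refine congrFun (ODE_solution_unique_of_locallyLipschitz_add (f := x)
    (g := fun t _ => x t i) hG (fun t _ => Φ (x t) i) (fun t => ?_) (fun t => ?_) h₀) t
  · simpa using hx t
  · have htangent : (Φ (fun _ => x t i) - fun _ => Φ (fun _ => x t i) i) = 0 :=
      funext fun j => sub_eq_zero.2 (hdiag _ j i)
    simpa [htangent] using hy t

end Uniqueness

def replicatorField {M : ℕ} (B : Matrix (Fin M) (Fin M) ℝ) (y : Fin M → ℝ) (s : Fin M) : ℝ :=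
  y s * ((∑ r, B s r * y r) - ∑ s', ∑ r, y s' * B s' r * y r)

section Homogeneous

variable {N M : ℕ} {a : Fin N → Fin N → ℝ} {B : Matrix (Fin M) (Fin M) ℝ} {v : Fin N}

theorem pGraph_const (hv : ∑ w, a v w ≠ 0) (s : Fin M) (y : Fin M → ℝ) :
    pGraph a (fun _ => B) v s (fun _ => y) = ∑ r, B s r * y r := by
  unfold pGraph
  congr! 2 with r
  rw [← Finset.sum_mul, one_div, inv_mul_cancel_left₀ hv]

theorem phiGraph_const (hv : ∑ w, a v w ≠ 0) (y : Fin M → ℝ) :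
    phiGraph a (fun _ => B) v (fun _ => y) = ∑ s', ∑ r, y s' * B s' r * y r := by
  simp only [phiGraph, pGraph_const hv, Finset.mul_sum, mul_assoc]

theorem FGraph_const (hv : ∑ w, a v w ≠ 0) (s : Fin M) (y : Fin M → ℝ) :
    FGraph a (fun _ => B) v s (fun _ => y) = replicatorField B y s := by
  rw [FGraph, pGraph_const hv, phiGraph_const hv, replicatorField]

theorem contDiff_FGraph (a : Fin N → Fin N → ℝ) (B : Fin N → Matrix (Fin M) (Fin M) ℝ) :
    ContDiff ℝ 1 fun x v s => FGraph a B v s x := by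
  unfold FGraph phiGraph pGraph
  fun_prop

end Homogeneous

theorem homogeneous_stays_homogeneous_general
    (N M : ℕ)
    (a : Fin N → Fin N → ℝ)
    (hd : ∀ v, 0 < ∑ w, a v w)
    (B : Fin N → Matrix (Fin M) (Fin M) ℝ)
    (B₀ : Matrix (Fin M) (Fin M) ℝ)
    (hB : ∀ v, B v = B₀)
    (x : ℝ → Fin N → Fin M → ℝ)
    (hdiff : ∀ v s, Differentiable ℝ (fun t => x t v s))
    (hode : ∀ t v s, deriv (fun τ => x τ v s) t = FGraph a B v s (x t))
    (c : Fin M → ℝ)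
    (hinit : ∀ v, x 0 v = c) :
    (∀ (t : ℝ) (v w : Fin N), x t v = x t w) ∧
    (∀ (v : Fin N),
      (∀ (t : ℝ) (s : Fin M),
        deriv (fun τ => x τ v s) t =
          x t v s * ((∑ r, B₀ s r * x t v r) -
            ∑ s', ∑ r, x t v s' * B₀ s' r * x t v r)) ∧
      x 0 v = c) := by
  obtain rfl : B = fun _ => B₀ := funext hB
  have hx : ∀ t, HasDerivAt x (fun v s => FGraph a (fun _ => B₀) v s (x t)) t := fun t =>
    hasDerivAt_pi.2 fun v => hasDerivAt_pi.2 fun s => hode t v s ▸ (hdiff v s t).hasDerivAt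
  have hom : ∀ t v, x t = fun _ => x t v := fun t v =>
    eq_const_of_hasDerivAt_of_tangent_diagonal (contDiff_FGraph a _).locallyLipschitz
      (fun y u w => funext fun s => by rw [FGraph_const (hd u).ne', FGraph_const (hd w).ne'])
      hx v (funext fun w => (hinit w).trans (hinit v).symm) t
  refine ⟨fun t v w => by rw [hom t w], fun v => ⟨fun t s => ?_, hinit v⟩⟩
  rw [hode, hom t v, FGraph_const (hd v).ne']
  rfl

theorem homogeneous_stays_homogeneous
    (N M : ℕ) (hN : 1 ≤ N) (hM : 1 ≤ M)
    (a : Fin N → Fin N → ℝ)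
    (ha : ∀ v w, 0 ≤ a v w) (haa : ∀ v, a v v = 0)
    (hd : ∀ v, 0 < ∑ w, a v w)
    (B : Fin N → Matrix (Fin M) (Fin M) ℝ)
    (B₀ : Matrix (Fin M) (Fin M) ℝ)
    (hB : ∀ v, B v = B₀)
    (x : ℝ → Fin N → Fin M → ℝ)
    (hdiff : ∀ v s, Differentiable ℝ (fun t => x t v s))
    (hode : ∀ t v s, deriv (fun τ => x τ v s) t = FGraph a B v s (x t))
    (c : Fin M → ℝ)
    (hinit : ∀ v, x 0 v = c) :
    (∀ (t : ℝ) (v w : Fin N), x t v = x t w) ∧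
    (∀ (v : Fin N),
      (∀ (t : ℝ) (s : Fin M),
        deriv (fun τ => x τ v s) t =
          x t v s * ((∑ r, B₀ s r * x t v r) -
            ∑ s', ∑ r, x t v s' * B₀ s' r * x t v r)) ∧
      x 0 v = c) :=
  homogeneous_stays_homogeneous_general N M a hd B B₀ hB x hdiff hode c hinit
end
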